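/- Let p : ℝⁿ → ℝ be a bounded, continuously differentiable probability density whose gradient ∇p is bounded and uniformly continuous, and let y ∈ ℝⁿ be a point with p(y) > 0. For σ > 0 let q_σ = p * g_σ denote the convolution of p with the N(0, σ²I) density g_σ. Then as σ → 0⁺ one has q_σ(y) → p(y) and ∇q_σ(y) → ∇p(y), hence ∇ log q_σ(y) → ∇ log p(y); consequently the exact optimal-DAE residual satisfies σ² ∇ log q_σ(y) = σ² ∇ log p(y) + o(σ²) as σ² → 0. -/

import Mathlib

/-! After the substitution `z = σ • u`, `q_σ(y) = ∫ g₁(u) p(y - σ u) du`, and differentiating under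
the integral sign (legitimate because `p` and `∇p` are bounded and `g_σ` is integrable) gives
`∇q_σ(y) = ∫ g₁(u) ∇p(y - σ u) du`. Dominated convergence with dominating function `C g₁` sends
these to `p(y)` and `∇p(y)` as `σ → 0⁺`. Since `p(y) > 0`, eventually `q_σ(y) > 0`, so
`∇ log q_σ(y) = ∇q_σ(y) / q_σ(y) → ∇p(y) / p(y) = ∇ log p(y)`, and multiplying by `σ²` gives the
little-o statement. -/

open MeasureTheory Filter Asymptotics Real InnerProductSpace Module
open scoped Topology

section ConvolutionDerivative

variable {E F : Type*} [NormedAddCommGroup E] [NormedSpace ℝ E] [FiniteDimensional ℝ E]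
  [MeasurableSpace E] [BorelSpace E] [NormedAddCommGroup F] [NormedSpace ℝ F]
  {μ : Measure E} {k : E → ℝ} {f : E → F}

theorem hasFDerivAt_integral_smul_comp_sub (hk : Integrable k μ) (hf : ContDiff ℝ 1 f)
    (hfb : ∃ C, ∀ x, ‖f x‖ ≤ C) (hf'b : ∃ C, ∀ x, ‖fderiv ℝ f x‖ ≤ C) (x₀ : E) :
    HasFDerivAt (fun x => ∫ z, k z • f (x - z) ∂μ) (∫ z, k z • fderiv ℝ f (x₀ - z) ∂μ) x₀ := by
  obtain ⟨C, hC⟩ := hfb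
  obtain ⟨C', hC'⟩ := hf'b
  have hsub : ∀ x : E, Continuous fun z : E => x - z := fun x => by fun_prop
  refine hasFDerivAt_integral_of_dominated_of_fderiv_le
    (F' := fun x z => k z • fderiv ℝ f (x - z)) (bound := fun z => C' * ‖k z‖)
    univ_mem (Eventually.of_forall fun x =>
      hk.aestronglyMeasurable.smul (hf.continuous.comp (hsub x)).aestronglyMeasurable) ?_
    (hk.aestronglyMeasurable.smul
      ((hf.continuous_fderiv one_ne_zero).comp (hsub x₀)).aestronglyMeasurable)
    (Eventually.of_forall fun z x _ => ?_) (hk.norm.const_mul C')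
    (Eventually.of_forall fun z x _ => ?_)
  · refine (hk.norm.mul_const C).mono'
      (hk.aestronglyMeasurable.smul (hf.continuous.comp (hsub x₀)).aestronglyMeasurable)
      (Eventually.of_forall fun z => ?_)
    rw [norm_smul]
    exact mul_le_mul_of_nonneg_left (hC _) (norm_nonneg _)
  · rw [norm_smul, mul_comm]
    exact mul_le_mul_of_nonneg_right (hC' _) (norm_nonneg _)
  · exact (((hf.differentiable one_ne_zero (x - z)).hasFDerivAt.comp x
      ((hasFDerivAt_id x).sub_const z)).const_smul (k z)).congr_fderiv (by simp)

end ConvolutionDerivative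

section Gradient

variable {E : Type*} [NormedAddCommGroup E] [InnerProductSpace ℝ E] [CompleteSpace E]
  {f : E → ℝ} {f' : E} {x : E}

theorem HasGradientAt.log (hf : HasGradientAt f f' x) (hx : f x ≠ 0) :
    HasGradientAt (fun y => Real.log (f y)) ((f x)⁻¹ • f') x := by
  rw [hasGradientAt_iff_hasFDerivAt, map_smul]
  exact (hasGradientAt_iff_hasFDerivAt.mp hf).log hx

theorem ContDiff.continuous_gradient (hf : ContDiff ℝ 1 f) : Continuous (gradient f) :=
  (toDual ℝ E).symm.continuous.comp (hf.continuous_fderiv one_ne_zero)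

theorem norm_fderiv_eq_norm_gradient : ‖fderiv ℝ f x‖ = ‖gradient f x‖ := by
  rw [← toDual_gradient, LinearIsometryEquiv.norm_map]

variable [FiniteDimensional ℝ E] [MeasurableSpace E] [BorelSpace E] {μ : Measure E} {k : E → ℝ}

theorem hasGradientAt_integral_smul_comp_sub (hk : Integrable k μ) (hf : ContDiff ℝ 1 f)
    (hfb : ∃ C, ∀ x, ‖f x‖ ≤ C) (hf'b : ∃ C, ∀ x, ‖gradient f x‖ ≤ C) (x₀ : E) :
    HasGradientAt (fun x => ∫ z, k z • f (x - z) ∂μ) (∫ z, k z • gradient f (x₀ - z) ∂μ) x₀ := by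
  simp_rw [← norm_fderiv_eq_norm_gradient] at hf'b
  rw [hasGradientAt_iff_hasFDerivAt]
  refine (hasFDerivAt_integral_smul_comp_sub hk hf hfb hf'b x₀).congr_fderiv ?_
  simpa only [LinearIsometryEquiv.coe_toLinearIsometry, map_smul, toDual_gradient] using
    (toDual ℝ E).toLinearIsometry.integral_comp_comm (μ := μ) fun z => k z • gradient f (x₀ - z)

end Gradient

section Gaussian

variable {E F : Type*} [NormedAddCommGroup E] [InnerProductSpace ℝ E]
  [NormedAddCommGroup F] [NormedSpace ℝ F]

noncomputable def gaussianDensity (σ : ℝ) (z : E) : ℝ :=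
  (2 * π * σ ^ 2) ^ (-(finrank ℝ E : ℝ) / 2) * exp (-‖z‖ ^ 2 / (2 * σ ^ 2))

theorem gaussianDensity_nonneg (σ : ℝ) (z : E) : 0 ≤ gaussianDensity σ z := by
  unfold gaussianDensity; positivity

theorem continuous_gaussianDensity (σ : ℝ) : Continuous (gaussianDensity (E := E) σ) := by
  unfold gaussianDensity; fun_prop

theorem gaussianDensity_eq (σ : ℝ) :
    gaussianDensity (E := E) σ = fun z => (2 * π * σ ^ 2) ^ (-(finrank ℝ E : ℝ) / 2) *
      exp (-(2 * σ ^ 2)⁻¹ * ‖z‖ ^ 2) := by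
  ext z; unfold gaussianDensity; ring_nf

theorem gaussianDensity_smul {σ : ℝ} (hσ : 0 < σ) (u : E) :
    gaussianDensity σ (σ • u) = (σ ^ finrank ℝ E)⁻¹ * gaussianDensity 1 u := by
  have hexp : -‖σ • u‖ ^ 2 / (2 * σ ^ 2) = -‖u‖ ^ 2 / (2 * 1 ^ 2) := by
    rw [norm_smul, Real.norm_of_nonneg hσ.le]; field_simp
  have hconst : (2 * π * σ ^ 2) ^ (-(finrank ℝ E : ℝ) / 2)
      = (σ ^ finrank ℝ E)⁻¹ * (2 * π * 1 ^ 2) ^ (-(finrank ℝ E : ℝ) / 2) := by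
    rw [one_pow, mul_one, Real.mul_rpow (by positivity) (by positivity), mul_comm,
      ← Real.rpow_natCast σ 2, ← Real.rpow_mul hσ.le, ← Real.rpow_natCast, ← Real.rpow_neg hσ.le]
    congr 2; push_cast; ring
  rw [gaussianDensity, gaussianDensity, hexp, hconst, mul_assoc]

variable [FiniteDimensional ℝ E] [MeasurableSpace E] [BorelSpace E]

theorem integrable_gaussianDensity {σ : ℝ} (hσ : σ ≠ 0) :
    Integrable (gaussianDensity (E := E) σ) := by
  have hb : 0 < ((2 * σ ^ 2)⁻¹ : ℂ).re := by norm_cast; positivity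
  rw [gaussianDensity_eq]
  refine Integrable.const_mul ?_ _
  refine (GaussianFourier.integrable_cexp_neg_mul_sq_norm_add hb 0 (0 : E)).norm.congr
    (Eventually.of_forall fun z => ?_)
  simp [Complex.norm_exp, ← Complex.ofReal_pow]

theorem integral_gaussianDensity {σ : ℝ} (hσ : σ ≠ 0) :
    ∫ z, gaussianDensity (E := E) σ z = 1 := by
  rw [gaussianDensity_eq, integral_const_mul,
    GaussianFourier.integral_rexp_neg_mul_sq_norm (by positivity), div_inv_eq_mul, ← mul_assoc,
    mul_comm π 2, ← Real.rpow_add (by positivity), neg_div, neg_add_cancel, Real.rpow_zero]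

noncomputable def gaussianSmoothing (f : E → F) (σ : ℝ) (x : E) : F :=
  ∫ z, gaussianDensity σ z • f (x - z)

theorem gaussianSmoothing_eq_integral_comp_smul {σ : ℝ} (hσ : 0 < σ) (f : E → F) (x : E) :
    gaussianSmoothing f σ x = ∫ u, gaussianDensity 1 u • f (x - σ • u) := by
  have h := Measure.integral_comp_smul_of_nonneg volume
    (fun z => gaussianDensity σ z • f (x - z)) σ (hR := hσ.le)
  simp only [gaussianDensity_smul hσ, mul_smul, integral_smul] at h
  exact (smul_right_injective F (inv_ne_zero (pow_pos hσ (finrank ℝ E)).ne') h).symm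

theorem tendsto_integral_gaussianDensity_one_smul_comp_sub [CompleteSpace F] {f : E → F}
    (hf : Continuous f) (hfb : ∃ C, ∀ x, ‖f x‖ ≤ C) (x : E) :
    Tendsto (fun σ : ℝ => ∫ u, gaussianDensity 1 u • f (x - σ • u)) (𝓝 0) (𝓝 (f x)) := by
  obtain ⟨C, hC⟩ := hfb
  have hlim : ∫ u : E, gaussianDensity 1 u • f x = f x := by
    rw [integral_smul_const, integral_gaussianDensity one_ne_zero, one_smul]
  rw [← hlim]
  refine tendsto_integral_filter_of_dominated_convergence (fun u => C * gaussianDensity 1 u)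
    (Eventually.of_forall fun σ => ?_) (Eventually.of_forall fun σ => ?_)
    ((integrable_gaussianDensity one_ne_zero).const_mul C) (Eventually.of_forall fun u => ?_)
  · exact ((continuous_gaussianDensity 1).smul (hf.comp (by fun_prop))).aestronglyMeasurable
  · refine Eventually.of_forall fun u => ?_
    rw [norm_smul, Real.norm_of_nonneg (gaussianDensity_nonneg 1 u), mul_comm]
    exact mul_le_mul_of_nonneg_right (hC _) (gaussianDensity_nonneg 1 u)
  · refine (Tendsto.const_smul ?_ _)
    simpa [Function.comp_def] using
      (hf.comp (by fun_prop : Continuous fun σ : ℝ => x - σ • u)).tendsto 0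

theorem tendsto_gaussianSmoothing [CompleteSpace F] {f : E → F} (hf : Continuous f)
    (hfb : ∃ C, ∀ x, ‖f x‖ ≤ C) (x : E) :
    Tendsto (fun σ => gaussianSmoothing f σ x) (𝓝[>] 0) (𝓝 (f x)) :=
  ((tendsto_integral_gaussianDensity_one_smul_comp_sub hf hfb x).mono_left
    nhdsWithin_le_nhds).congr' <| eventually_nhdsWithin_of_forall fun _ hσ =>
      (gaussianSmoothing_eq_integral_comp_smul hσ f x).symm

theorem hasGradientAt_gaussianSmoothing {f : E → ℝ} (hf : ContDiff ℝ 1 f)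
    (hfb : ∃ C, ∀ x, ‖f x‖ ≤ C) (hf'b : ∃ C, ∀ x, ‖gradient f x‖ ≤ C) {σ : ℝ} (hσ : σ ≠ 0)
    (x : E) : HasGradientAt (gaussianSmoothing f σ) (gaussianSmoothing (gradient f) σ x) x :=
  hasGradientAt_integral_smul_comp_sub (integrable_gaussianDensity hσ) hf hfb hf'b x

end Gaussian

theorem smoothed_score_tendsto_score_general {n : ℕ}
    (p : EuclideanSpace ℝ (Fin n) → ℝ)
    (hpb : ∃ C, ∀ x, |p x| ≤ C)
    (hp : ContDiff ℝ 1 p)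
    (hgradb : ∃ C, ∀ x, ‖gradient p x‖ ≤ C)
    (y : EuclideanSpace ℝ (Fin n)) (hy : 0 < p y)
    (g : ℝ → EuclideanSpace ℝ (Fin n) → ℝ)
    (hg : ∀ σ z, g σ z = (2 * Real.pi * σ ^ 2) ^ (-(n : ℝ) / 2) *
      Real.exp (-‖z‖ ^ 2 / (2 * σ ^ 2)))
    (q : ℝ → EuclideanSpace ℝ (Fin n) → ℝ)
    (hq : ∀ σ x, q σ x = ∫ z, p (x - z) * g σ z) :
    Tendsto (fun σ => q σ y) (nhdsWithin 0 (Set.Ioi 0)) (nhds (p y)) ∧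
    Tendsto (fun σ => gradient (q σ) y) (nhdsWithin 0 (Set.Ioi 0))
      (nhds (gradient p y)) ∧
    Tendsto (fun σ => gradient (fun z => Real.log (q σ z)) y)
      (nhdsWithin 0 (Set.Ioi 0))
      (nhds (gradient (fun z => Real.log (p z)) y)) ∧
    (fun σ => σ ^ 2 • gradient (fun z => Real.log (q σ z)) y
        - σ ^ 2 • gradient (fun z => Real.log (p z)) y)
      =o[nhdsWithin 0 (Set.Ioi 0)] (fun σ => σ ^ 2) := by
  obtain rfl : g = gaussianDensity := by
    funext σ z; rw [hg, gaussianDensity, finrank_euclideanSpace_fin]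
  obtain rfl : q = gaussianSmoothing p := by
    funext σ x; simp only [hq, gaussianSmoothing, smul_eq_mul, mul_comm]
  simp_rw [← Real.norm_eq_abs] at hpb
  have hgrad σ (hσ : σ ∈ Set.Ioi (0 : ℝ)) :=
    hasGradientAt_gaussianSmoothing hp hpb hgradb (ne_of_gt hσ) y
  have hq_tendsto := tendsto_gaussianSmoothing hp.continuous hpb y
  have hsmooth_grad := tendsto_gaussianSmoothing hp.continuous_gradient hgradb y
  have hlog_tendsto : Tendsto (fun σ => gradient (fun z => log (gaussianSmoothing p σ z)) y)
      (𝓝[>] 0) (𝓝 (gradient (fun z => log (p z)) y)) := by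
    rw [((hp.differentiable one_ne_zero y).hasGradientAt.log hy.ne').gradient]
    refine ((hq_tendsto.inv₀ hy.ne').smul hsmooth_grad).congr' ?_
    filter_upwards [self_mem_nhdsWithin, hq_tendsto.eventually (eventually_ne_nhds hy.ne')]
      with σ hσ hqσ
    exact (((hgrad σ hσ).log hqσ).gradient).symm
  have hgrad_tendsto : Tendsto (fun σ => gradient (gaussianSmoothing p σ) y) (𝓝[>] 0)
      (𝓝 (gradient p y)) :=
    hsmooth_grad.congr' <| eventually_nhdsWithin_of_forall fun σ hσ => (hgrad σ hσ).gradient.symm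
  refine ⟨hq_tendsto, hgrad_tendsto, hlog_tendsto, ?_⟩
  simpa [smul_sub] using (isBigO_refl (fun σ : ℝ => σ ^ 2) _).smul_isLittleO
    ((isLittleO_one_iff ℝ).2 (tendsto_sub_nhds_zero_iff.2 hlog_tendsto))

/-- Let `p` be a bounded C¹ probability density on ℝⁿ whose gradient is bounded and
uniformly continuous, and let `y` be a point with `p(y) > 0`. Let `q σ = p * g_σ` be
the convolution of `p` with the `N(0, σ²I)` density. Then as `σ → 0⁺`:
`q σ (y) → p(y)`, `∇(q σ)(y) → ∇p(y)`, hence `∇ log (q σ)(y) → ∇ log p(y)`, and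
consequently `σ² ∇ log (q σ)(y) = σ² ∇ log p(y) + o(σ²)`. -/
theorem smoothed_score_tendsto_score {n : ℕ}
    (p : EuclideanSpace ℝ (Fin n) → ℝ)
    (hpb : ∃ C, ∀ x, |p x| ≤ C)
    (hp : ContDiff ℝ 1 p)
    (hgradb : ∃ C, ∀ x, ‖gradient p x‖ ≤ C)
    (hgradu : UniformContinuous (fun x => gradient p x))
    (hpint : Integrable p) (hpnn : ∀ x, 0 ≤ p x) (hpone : ∫ x, p x = 1)
    (y : EuclideanSpace ℝ (Fin n)) (hy : 0 < p y)
    (g : ℝ → EuclideanSpace ℝ (Fin n) → ℝ)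
    (hg : ∀ σ z, g σ z = (2 * Real.pi * σ ^ 2) ^ (-(n : ℝ) / 2) *
      Real.exp (-‖z‖ ^ 2 / (2 * σ ^ 2)))
    (q : ℝ → EuclideanSpace ℝ (Fin n) → ℝ)
    (hq : ∀ σ x, q σ x = ∫ z, p (x - z) * g σ z) :
    Tendsto (fun σ => q σ y) (nhdsWithin 0 (Set.Ioi 0)) (nhds (p y)) ∧
    Tendsto (fun σ => gradient (q σ) y) (nhdsWithin 0 (Set.Ioi 0))
      (nhds (gradient p y)) ∧
    Tendsto (fun σ => gradient (fun z => Real.log (q σ z)) y)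
      (nhdsWithin 0 (Set.Ioi 0))
      (nhds (gradient (fun z => Real.log (p z)) y)) ∧
    (fun σ => σ ^ 2 • gradient (fun z => Real.log (q σ z)) y
        - σ ^ 2 • gradient (fun z => Real.log (p z)) y)
      =o[nhdsWithin 0 (Set.Ioi 0)] (fun σ => σ ^ 2) :=
  smoothed_score_tendsto_score_general p hpb hp hgradb y hy g hg q hq
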